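/- Let D be the derivation of ℚ[x,y,z] with D(x)=xyz, D(y)=yz², D(z)=y²z. For every n ≥ 0, D^n(y) = y · Σ_{σ ∈ Q_n} y^{2·ap(σ)} z^{2n − 2·ap(σ)}, an identity in ℚ[x,y,z]. -/

import Mathlib

/-!
Every Stirling permutation of order `n+1` arises in exactly one way by inserting the block
`(n+1)(n+1)` into one of the `2n+1` gaps of a Stirling permutation `σ` of order `n`. Inserting
at the front leaves the ascent-plateaus as they are; inserting just before or inside an
ascent-plateau destroys it but creates the new one `σ_g < (n+1) = (n+1)`; every other gap
only creates the new one. Ascent-plateaus are never adjacent, so `ap` is unchanged for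
`2 ap(σ) + 1` gaps and grows by one for the remaining `2n - 2 ap(σ)`. This is exactly the rule
`D (y^(2a+1) z^(2n-2a)) = (2a+1) y^(2a+1) z^(2n-2a+2) + (2n-2a) y^(2a+3) z^(2n-2a)`,
so the formula follows by induction on `n`.
-/

open Finset MvPolynomial

/-- Stirling permutations of order `n`, encoded as functions `Fin (2*n) → Fin (n+1)`
in one-line notation (position `i` holds the letter `σ (i) ∈ {1,…,n}`), such that each
letter `1,…,n` occurs exactly twice and all entries between the two occurrences of a
letter are larger than that letter. -/
def StirlingSet (n : ℕ) : Finset (Fin (2*n) → Fin (n+1)) :=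
  Finset.univ.filter (fun σ =>
    (∀ v : Fin (n+1), (v : ℕ) ≠ 0 →
        (Finset.univ.filter (fun i => σ i = v)).card = 2) ∧
    (∀ i j k : Fin (2*n), i < j → j < k → σ i = σ k → σ i < σ j))

/-- The letter at position `i ∈ {1,…,2n}` of a Stirling permutation, with the
convention that positions outside this range (in particular position `0`) hold `0`. -/
def sval {n : ℕ} (σ : Fin (2*n) → Fin (n+1)) (i : ℕ) : ℕ :=
  if h : 1 ≤ i ∧ i ≤ 2*n then (σ ⟨i - 1, by omega⟩ : ℕ) else 0

/-- The number of ascent-plateaus: indices `2 ≤ i ≤ 2n-1` with `σ_{i-1} < σ_i = σ_{i+1}`. -/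
def apQ {n : ℕ} (σ : Fin (2*n) → Fin (n+1)) : ℕ :=
  ((Finset.Icc 2 (2*n - 1)).filter
    (fun i => sval σ (i-1) < sval σ i ∧ sval σ i = sval σ (i+1))).card

/-- The number of left ascent-plateaus: indices `1 ≤ i ≤ 2n-1` with
`σ_{i-1} < σ_i = σ_{i+1}`, where `σ_0 = 0`. -/
def lapQ {n : ℕ} (σ : Fin (2*n) → Fin (n+1)) : ℕ :=
  ((Finset.Icc 1 (2*n - 1)).filter
    (fun i => sval σ (i-1) < sval σ i ∧ sval σ i = sval σ (i+1))).card

/-- The number of double ascents: indices `1 ≤ i ≤ 2n-1` with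
`σ_{i-1} < σ_i < σ_{i+1}`, where `σ_0 = 0`. -/
def dascQ {n : ℕ} (σ : Fin (2*n) → Fin (n+1)) : ℕ :=
  ((Finset.Icc 1 (2*n - 1)).filter
    (fun i => sval σ (i-1) < sval σ i ∧ sval σ i < sval σ (i+1))).card

/-- The number of descent-plateaus: indices `2 ≤ i ≤ 2n-1` with
`σ_{i-1} > σ_i = σ_{i+1}`. -/
def dpQ {n : ℕ} (σ : Fin (2*n) → Fin (n+1)) : ℕ :=
  ((Finset.Icc 2 (2*n - 1)).filter
    (fun i => sval σ i < sval σ (i-1) ∧ sval σ i = sval σ (i+1))).card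

/-- The number of ascents: indices `1 ≤ i ≤ 2n-1` with `σ_i < σ_{i+1}` or `i = 1`. -/
def ascQ {n : ℕ} (σ : Fin (2*n) → Fin (n+1)) : ℕ :=
  ((Finset.Icc 1 (2*n - 1)).filter
    (fun i => sval σ i < sval σ (i+1) ∨ i = 1)).card

/-- The number of plateaus: indices `1 ≤ i ≤ 2n-1` with `σ_i = σ_{i+1}`. -/
def platQ {n : ℕ} (σ : Fin (2*n) → Fin (n+1)) : ℕ :=
  ((Finset.Icc 1 (2*n - 1)).filter (fun i => sval σ i = sval σ (i+1))).card

/-- The flag ascent-plateau number: `2·ap(σ)+1` if `σ_1 = σ_2`, and `2·ap(σ)` otherwise. -/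
def fapQ {n : ℕ} (σ : Fin (2*n) → Fin (n+1)) : ℕ :=
  if 1 ≤ n ∧ sval σ 1 = sval σ 2 then 2 * apQ σ + 1 else 2 * apQ σ


section Sval

variable {n : ℕ} (σ : Fin (2*n) → Fin (n+1))

lemma sval_of_mem {j : ℕ} (h1 : 1 ≤ j) (h2 : j ≤ 2*n) :
    sval σ j = σ ⟨j - 1, by omega⟩ := dif_pos ⟨h1, h2⟩

lemma sval_of_not_mem {j : ℕ} (h : j = 0 ∨ 2*n < j) : sval σ j = 0 := dif_neg (by omega)

lemma sval_le (j : ℕ) : sval σ j ≤ n := by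
  unfold sval
  split
  · exact Nat.lt_succ_iff.mp (Fin.is_lt _)
  · exact Nat.zero_le n

lemma sval_lt_succ (j : ℕ) : sval σ j < n + 1 := Nat.lt_succ_of_le (sval_le σ j)

lemma sval_succ (i : Fin (2*n)) : sval σ (i + 1) = σ i := by
  rw [sval_of_mem σ (by omega) (by omega)]
  rfl

lemma mem_Icc_of_sval_ne_zero {j : ℕ} (h : sval σ j ≠ 0) : j ∈ Icc 1 (2*n) := by
  by_contra h'
  rw [mem_Icc] at h'
  exact h (sval_of_not_mem σ (by omega))

lemma sval_injective : Function.Injective (sval : (Fin (2*n) → Fin (n+1)) → ℕ → ℕ) :=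
  fun σ τ h => funext fun i => Fin.ext (by rw [← sval_succ, ← sval_succ, h])

end Sval

def IsStirlingWord (n : ℕ) (s : ℕ → ℕ) : Prop :=
  (∀ v, 1 ≤ v → v ≤ n → ((Icc 1 (2*n)).filter (s · = v)).card = 2) ∧
    ∀ i j k, 1 ≤ i → i < j → j < k → k ≤ 2*n → s i = s k → s i < s j

lemma filter_sval_eq_map {n : ℕ} (σ : Fin (2*n) → Fin (n+1)) (v : ℕ) :
    (Icc 1 (2*n)).filter (sval σ · = v) =
      (univ.filter (fun i => (σ i : ℕ) = v)).map
        (Fin.valEmbedding.trans (addRightEmbedding 1)) := by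
  ext p
  simp only [mem_filter, mem_Icc, mem_map, mem_univ, true_and, Function.Embedding.trans_apply,
    Fin.valEmbedding_apply, addRightEmbedding_apply]
  constructor
  · rintro ⟨⟨h1, h2⟩, hp⟩
    exact ⟨⟨p - 1, by omega⟩, by rwa [sval_of_mem σ h1 h2] at hp, Nat.sub_add_cancel h1⟩
  · rintro ⟨i, hi, rfl⟩
    exact ⟨⟨by omega, by omega⟩, by rw [sval_succ, hi]⟩

lemma mem_stirlingSet_iff {n : ℕ} (σ : Fin (2*n) → Fin (n+1)) :
    σ ∈ StirlingSet n ↔ IsStirlingWord n (sval σ) := by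
  simp only [StirlingSet, mem_filter, mem_univ, true_and, IsStirlingWord, filter_sval_eq_map,
    card_map]
  refine and_congr ⟨fun h v hv1 hv2 => ?_, fun h v hv => ?_⟩
    ⟨fun h i j k hi hij hjk hk hik => ?_, fun h i j k hij hjk hik => ?_⟩
  · simpa [Fin.ext_iff] using h ⟨v, by omega⟩ (Nat.one_le_iff_ne_zero.mp hv1)
  · simpa [Fin.ext_iff] using h v (by omega) (by omega)
  · rw [sval_of_mem σ hi (by omega), sval_of_mem σ (by omega) hk] at hik
    rw [sval_of_mem σ hi (by omega), sval_of_mem σ (by omega) (by omega)]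
    exact h _ _ _ (Fin.mk_lt_mk.mpr (by omega)) (Fin.mk_lt_mk.mpr (by omega)) (Fin.ext hik)
  · have := h (i + 1) (j + 1) (k + 1) (by omega) (by simpa using hij) (by simpa using hjk)
      (by omega) (by rw [sval_succ, sval_succ, hik])
    rwa [sval_succ, sval_succ] at this

/- Inserting a pair after position `g` (`g = 0`: at the front) moves position `p` to
`gapShift g p`; positions are 1-based, as for `sval`. -/
def gapShift (g p : ℕ) : ℕ := if p ≤ g then p else p + 2

lemma gapShift_strictMono (g : ℕ) : StrictMono (gapShift g) := by
  intro p q h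
  unfold gapShift
  split_ifs <;> omega

lemma gapShift_mem_Icc_iff {n g : ℕ} (hg : g ≤ 2*n) (p : ℕ) :
    gapShift g p ∈ Icc 1 (2*(n+1)) ↔ p ∈ Icc 1 (2*n) := by
  simp only [mem_Icc, gapShift]
  split_ifs <;> omega

lemma exists_gapShift_eq {g j : ℕ} (h1 : j ≠ g + 1) (h2 : j ≠ g + 2) :
    ∃ p, gapShift g p = j := by
  by_cases hj : j ≤ g
  · exact ⟨j, if_pos hj⟩
  · exact ⟨j - 2, by unfold gapShift; split_ifs <;> omega⟩

def wordInsertPair (s : ℕ → ℕ) (g m : ℕ) : ℕ → ℕ :=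
  fun j => if j ≤ g then s j else if j ≤ g + 2 then m else s (j - 2)

section WordInsertPair

variable {s : ℕ → ℕ} {g m : ℕ}

lemma wordInsertPair_of_le {j : ℕ} (h : j ≤ g) : wordInsertPair s g m j = s j := if_pos h

lemma wordInsertPair_of_mem {j : ℕ} (h1 : g < j) (h2 : j ≤ g + 2) :
    wordInsertPair s g m j = m := by
  rw [wordInsertPair, if_neg (by omega), if_pos h2]

lemma wordInsertPair_of_gt {j : ℕ} (h : g + 2 < j) : wordInsertPair s g m j = s (j - 2) := by
  rw [wordInsertPair, if_neg (by omega), if_neg (by omega)]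

lemma wordInsertPair_gapShift (p : ℕ) : wordInsertPair s g m (gapShift g p) = s p := by
  unfold gapShift
  split_ifs with h
  · exact wordInsertPair_of_le h
  · rw [wordInsertPair_of_gt (by omega), Nat.add_sub_cancel]

lemma wordInsertPair_eq_iff (hs : ∀ j, s j < m) (j : ℕ) :
    wordInsertPair s g m j = m ↔ j = g + 1 ∨ j = g + 2 := by
  have := hs j
  have := hs (j - 2)
  unfold wordInsertPair
  split_ifs <;> omega

lemma filter_wordInsertPair_eq_map {n v : ℕ} (hg : g ≤ 2*n) (hvm : v ≠ m) :
    (Icc 1 (2*(n+1))).filter (wordInsertPair s g m · = v) =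
      ((Icc 1 (2*n)).filter (s · = v)).map
        ⟨gapShift g, (gapShift_strictMono g).injective⟩ := by
  ext j
  simp only [mem_filter, mem_map, Function.Embedding.coeFn_mk]
  constructor
  · rintro ⟨hj, hjv⟩
    have hj' : j ≠ g + 1 ∧ j ≠ g + 2 := by
      constructor <;> rintro rfl <;>
        exact hvm (hjv.symm.trans (wordInsertPair_of_mem (by omega) (by omega)))
    obtain ⟨p, rfl⟩ := exists_gapShift_eq hj'.1 hj'.2
    rw [wordInsertPair_gapShift] at hjv
    exact ⟨p, ⟨(gapShift_mem_Icc_iff hg p).mp hj, hjv⟩, rfl⟩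
  · rintro ⟨p, ⟨hp, hpv⟩, rfl⟩
    exact ⟨(gapShift_mem_Icc_iff hg p).mpr hp, by rwa [wordInsertPair_gapShift]⟩

lemma card_filter_wordInsertPair {n v : ℕ} (hg : g ≤ 2*n) (hvm : v ≠ m) :
    #((Icc 1 (2*(n+1))).filter (wordInsertPair s g m · = v)) =
      #((Icc 1 (2*n)).filter (s · = v)) := by
  rw [filter_wordInsertPair_eq_map hg hvm, card_map]

end WordInsertPair

lemma isStirlingWord_wordInsertPair {s : ℕ → ℕ} {n g : ℕ} (hg : g ≤ 2*n)
    (hs : ∀ j, s j ≤ n) :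
    IsStirlingWord (n+1) (wordInsertPair s g (n+1)) ↔ IsStirlingWord n s := by
  have hs' : ∀ j, s j < n + 1 := fun j => Nat.lt_succ_of_le (hs j)
  have hshift_mem := gapShift_mem_Icc_iff hg
  simp only [mem_Icc] at hshift_mem
  have hmono := gapShift_strictMono g
  constructor
  · rintro ⟨hcard, hord⟩
    refine ⟨fun v hv1 hv2 => ?_, fun i j k hi hij hjk hk hik => ?_⟩
    · rw [← card_filter_wordInsertPair hg (by omega : v ≠ n + 1)]
      exact hcard v hv1 (by omega)
    · have := hord (gapShift g i) (gapShift g j) (gapShift g k)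
        ((hshift_mem i).mpr ⟨hi, by omega⟩).1 (hmono hij) (hmono hjk)
        ((hshift_mem k).mpr ⟨by omega, hk⟩).2
        (by rwa [wordInsertPair_gapShift, wordInsertPair_gapShift])
      rwa [wordInsertPair_gapShift, wordInsertPair_gapShift] at this
  · rintro ⟨hcard, hord⟩
    refine ⟨fun v hv1 hv2 => ?_, fun i j k hi hij hjk hk hik => ?_⟩
    · rcases Nat.lt_or_ge v (n+1) with hv | hv
      · rw [card_filter_wordInsertPair hg (by omega)]
        exact hcard v hv1 (by omega)
      · rw [card_eq_two]
        refine ⟨g + 1, g + 2, by omega, ?_⟩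
        ext j
        simp only [mem_filter, mem_Icc, mem_insert, mem_singleton,
          show v = n + 1 by omega, wordInsertPair_eq_iff hs']
        omega
    · have hi_ne : ¬ (i = g + 1 ∨ i = g + 2) := by
        intro hi'
        have hk' := (wordInsertPair_eq_iff hs' k).mp (hik ▸ (wordInsertPair_eq_iff hs' i).mpr hi')
        omega
      have hk_ne : ¬ (k = g + 1 ∨ k = g + 2) := fun hk' =>
        hi_ne ((wordInsertPair_eq_iff hs' i).mp (hik.trans ((wordInsertPair_eq_iff hs' k).mpr hk')))
      obtain ⟨i', rfl⟩ := exists_gapShift_eq (g := g) (j := i) (by omega) (by omega)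
      obtain ⟨k', rfl⟩ := exists_gapShift_eq (g := g) (j := k) (by omega) (by omega)
      simp only [wordInsertPair_gapShift] at hik ⊢
      by_cases hj : j = g + 1 ∨ j = g + 2
      · rw [(wordInsertPair_eq_iff hs' j).mpr hj]
        exact hs' i'
      · obtain ⟨j', rfl⟩ := exists_gapShift_eq (g := g) (j := j) (by omega) (by omega)
        rw [wordInsertPair_gapShift]
        exact hord i' j' k' ((hshift_mem i').mp ⟨hi, by omega⟩).1 (hmono.lt_iff_lt.mp hij)
          (hmono.lt_iff_lt.mp hjk) ((hshift_mem k').mp ⟨by omega, hk⟩).2 hik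

section MaxPair

variable {n : ℕ}

def insertMaxPair (σ : Fin (2*n) → Fin (n+1)) (g : ℕ) : Fin (2*(n+1)) → Fin (n+2) :=
  fun i => ⟨wordInsertPair (sval σ) g (n+1) (i + 1), by
    unfold wordInsertPair; split_ifs <;> grind [sval_le]⟩

/- The `min` only serves to land in `Fin (n+1)`: it is inactive when the letters `n+1`
of `τ` sit at positions `g+1, g+2`. -/
def deleteMaxPair (τ : Fin (2*(n+1)) → Fin (n+2)) (g : ℕ) : Fin (2*n) → Fin (n+1) :=
  fun i => ⟨min (sval τ (gapShift g (i + 1))) n, by omega⟩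

lemma sval_insertMaxPair (σ : Fin (2*n) → Fin (n+1)) {g : ℕ} (hg : g ≤ 2*n) :
    sval (insertMaxPair σ g) = wordInsertPair (sval σ) g (n+1) := by
  funext j
  by_cases hj : 1 ≤ j ∧ j ≤ 2*(n+1)
  · rw [sval_of_mem _ hj.1 hj.2]
    simp only [insertMaxPair, Nat.sub_add_cancel hj.1]
  · rw [sval_of_not_mem _ (by omega)]
    unfold wordInsertPair
    split_ifs <;> first | omega | exact (sval_of_not_mem σ (by omega)).symm

lemma sval_deleteMaxPair (τ : Fin (2*(n+1)) → Fin (n+2)) (g : ℕ) {p : ℕ} (h1 : 1 ≤ p)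
    (h2 : p ≤ 2*n) : sval (deleteMaxPair τ g) p = min (sval τ (gapShift g p)) n := by
  rw [sval_of_mem _ h1 h2]
  simp only [deleteMaxPair, Nat.sub_add_cancel h1]

lemma insertMaxPair_deleteMaxPair {τ : Fin (2*(n+1)) → Fin (n+2)} {g : ℕ} (hg : g ≤ 2*n)
    (hτ : ∀ j, sval τ j = n + 1 ↔ j = g + 1 ∨ j = g + 2) :
    insertMaxPair (deleteMaxPair τ g) g = τ := by
  apply sval_injective
  rw [sval_insertMaxPair _ hg]
  funext j
  by_cases hj : j = g + 1 ∨ j = g + 2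
  · rw [(hτ j).mpr hj, wordInsertPair_of_mem (by omega) (by omega)]
  · obtain ⟨p, rfl⟩ := exists_gapShift_eq (g := g) (j := j) (by omega) (by omega)
    rw [wordInsertPair_gapShift]
    by_cases hp : 1 ≤ p ∧ p ≤ 2*n
    · rw [sval_deleteMaxPair τ g hp.1 hp.2]
      have := sval_le τ (gapShift g p)
      have := (hτ (gapShift g p)).not.mpr hj
      omega
    · rw [sval_of_not_mem _ (by omega),
        sval_of_not_mem _ (by unfold gapShift; split_ifs <;> omega)]

lemma insertMaxPair_injective {σ σ' : Fin (2*n) → Fin (n+1)} {g g' : ℕ} (hg : g ≤ 2*n)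
    (hg' : g' ≤ 2*n) (h : insertMaxPair σ g = insertMaxPair σ' g') : σ = σ' ∧ g = g' := by
  have hw := congrArg sval h
  rw [sval_insertMaxPair σ hg, sval_insertMaxPair σ' hg'] at hw
  have hgg : g = g' := by
    have h1 := (wordInsertPair_eq_iff (sval_lt_succ σ') (g + 1)).mp
      (hw ▸ (wordInsertPair_eq_iff (sval_lt_succ σ) _).mpr (Or.inl rfl))
    have h2 := (wordInsertPair_eq_iff (sval_lt_succ σ) (g' + 1)).mp
      (hw ▸ (wordInsertPair_eq_iff (sval_lt_succ σ') _).mpr (Or.inl rfl))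
    omega
  subst hgg
  refine ⟨sval_injective (funext fun p => ?_), rfl⟩
  simpa only [wordInsertPair_gapShift] using congrFun hw (gapShift g p)

end MaxPair

lemma exists_maxPair_positions {n : ℕ} {τ : Fin (2*(n+1)) → Fin (n+2)}
    (hτ : τ ∈ StirlingSet (n+1)) :
    ∃ g ≤ 2*n, ∀ j, sval τ j = n + 1 ↔ j = g + 1 ∨ j = g + 2 := by
  obtain ⟨hcard, hord⟩ := (mem_stirlingSet_iff τ).mp hτ
  have key : ∀ p q, p < q → (Icc 1 (2*(n+1))).filter (sval τ · = n + 1) = {p, q} →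
      ∃ g ≤ 2*n, ∀ j, sval τ j = n + 1 ↔ j = g + 1 ∨ j = g + 2 := by
    intro p q hpq hfib
    have hmem : ∀ j, sval τ j = n + 1 ↔ j = p ∨ j = q := fun j => by
      have := congrArg (j ∈ ·) hfib
      simp only [mem_filter, mem_insert, mem_singleton, eq_iff_iff] at this
      rw [← this]
      exact ⟨fun hj => ⟨mem_Icc_of_sval_ne_zero τ (by omega), hj⟩, And.right⟩
    have hp := (hmem p).mpr (Or.inl rfl)
    have hq := (hmem q).mpr (Or.inr rfl)
    have hp1 := mem_Icc.mp (mem_Icc_of_sval_ne_zero τ (j := p) (by omega))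
    have hq2 := mem_Icc.mp (mem_Icc_of_sval_ne_zero τ (j := q) (by omega))
    -- a letter strictly between the two copies of `n+1` would have to exceed `n+1`
    have hadj : q = p + 1 := by
      by_contra hne
      have := hord p (p + 1) q hp1.1 (by omega) (by omega) hq2.2 (hp.trans hq.symm)
      have := sval_le τ (p + 1)
      omega
    exact ⟨p - 1, by omega, fun j => by rw [hmem]; omega⟩
  obtain ⟨p, q, hpq, hfib⟩ := card_eq_two.mp (hcard (n+1) (by omega) le_rfl)
  rcases lt_or_gt_of_ne hpq with h | h
  · exact key p q h hfib
  · exact key q p h (hfib.trans (pair_comm p q))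

lemma sum_stirlingSet_succ {M : Type*} [AddCommMonoid M] (n : ℕ)
    (F : (Fin (2*(n+1)) → Fin (n+2)) → M) :
    ∑ τ ∈ StirlingSet (n+1), F τ =
      ∑ σ ∈ StirlingSet n, ∑ g ∈ range (2*n+1), F (insertMaxPair σ g) := by
  rw [← sum_product']
  symm
  refine sum_bij (fun p _ => insertMaxPair p.1 p.2) (fun p hp => ?_) (fun p hp p' hp' h => ?_)
    (fun τ hτ => ?_) (fun _ _ => rfl)
  · rw [mem_product, mem_range] at hp
    rw [mem_stirlingSet_iff, sval_insertMaxPair _ (by omega),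
      isStirlingWord_wordInsertPair (by omega) (sval_le p.1), ← mem_stirlingSet_iff]
    exact hp.1
  · rw [mem_product, mem_range] at hp hp'
    obtain ⟨h1, h2⟩ := insertMaxPair_injective (by omega) (by omega) h
    exact Prod.ext h1 h2
  · obtain ⟨g, hg, hpos⟩ := exists_maxPair_positions hτ
    have hdel := insertMaxPair_deleteMaxPair hg hpos
    refine ⟨(deleteMaxPair τ g, g), ?_, hdel⟩
    rw [mem_product, mem_range, mem_stirlingSet_iff,
      ← isStirlingWord_wordInsertPair hg (sval_le _), ← sval_insertMaxPair _ hg, hdel,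
      ← mem_stirlingSet_iff]
    exact ⟨hτ, by omega⟩

def IsAscentPlateau (s : ℕ → ℕ) (i : ℕ) : Prop := s (i - 1) < s i ∧ s i = s (i + 1)

instance (s : ℕ → ℕ) : DecidablePred (IsAscentPlateau s) := fun _ => instDecidableAnd

lemma isAscentPlateau_wordInsertPair {s : ℕ → ℕ} {g m : ℕ} (hs : ∀ j, s j < m) (j : ℕ) :
    IsAscentPlateau (wordInsertPair s g m) j ↔
      (j < g ∧ IsAscentPlateau s j) ∨ j = g + 1 ∨
        (g + 4 ≤ j ∧ IsAscentPlateau s (j - 2)) := by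
  unfold IsAscentPlateau
  by_cases hj : g + 4 ≤ j
  · rw [wordInsertPair_of_gt (by omega), wordInsertPair_of_gt (by omega),
      wordInsertPair_of_gt (by omega), show j - 1 - 2 = j - 2 - 1 by omega,
      show j + 1 - 2 = j - 2 + 1 by omega]
    omega
  · have := hs j
    have := hs (j - 1)
    have := hs (j - 2)
    unfold wordInsertPair
    split_ifs <;> omega

def ascentPlateaus {n : ℕ} (σ : Fin (2*n) → Fin (n+1)) : Finset ℕ :=
  (Icc 2 (2*n - 1)).filter (IsAscentPlateau (sval σ))

section AscentPlateaus

variable {n : ℕ} {σ : Fin (2*n) → Fin (n+1)}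

lemma card_ascentPlateaus (σ : Fin (2*n) → Fin (n+1)) : #(ascentPlateaus σ) = apQ σ := rfl

lemma mem_ascentPlateaus {i : ℕ} :
    i ∈ ascentPlateaus σ ↔ (2 ≤ i ∧ i ≤ 2*n - 1) ∧ IsAscentPlateau (sval σ) i := by
  rw [ascentPlateaus, mem_filter, mem_Icc]

lemma two_le_of_mem_ascentPlateaus {i : ℕ} (hi : i ∈ ascentPlateaus σ) : 2 ≤ i :=
  (mem_ascentPlateaus.mp hi).1.1

lemma succ_notMem_ascentPlateaus (hσ : σ ∈ StirlingSet n) {i : ℕ}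
    (hi : i ∈ ascentPlateaus σ) :
    i + 1 ∉ ascentPlateaus σ := by
  intro hi'
  rw [mem_ascentPlateaus] at hi hi'
  exact (((mem_stirlingSet_iff σ).mp hσ).2 i (i + 1) (i + 2) (by omega) (by omega) (by omega)
    (by omega) (hi.2.2.trans hi'.2.2)).ne hi.2.2

lemma ascentPlateaus_insertMaxPair (σ : Fin (2*n) → Fin (n+1)) {g : ℕ} (hg : g ≤ 2*n) :
    ascentPlateaus (insertMaxPair σ g) =
      (ascentPlateaus σ \ {g, g + 1}).image (gapShift g) ∪
        (if 1 ≤ g then {g + 1} else ∅) := by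
  ext j
  simp only [mem_ascentPlateaus, sval_insertMaxPair σ hg,
    isAscentPlateau_wordInsertPair (sval_lt_succ σ),
    mem_union, mem_image, mem_sdiff, mem_insert, mem_singleton]
  constructor
  · rintro ⟨hj, (⟨hjg, hap⟩ | rfl | ⟨hjg, hap⟩)⟩
    · exact Or.inl ⟨j, ⟨⟨⟨by omega, by omega⟩, hap⟩, by omega⟩, if_pos hjg.le⟩
    · exact Or.inr (by rw [if_pos (by omega)]; exact mem_singleton_self _)
    · exact Or.inl ⟨j - 2, ⟨⟨⟨by omega, by omega⟩, hap⟩, by omega⟩,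
        by unfold gapShift; split_ifs <;> omega⟩
  · rintro (⟨i, ⟨⟨hi, hap⟩, hig⟩, rfl⟩ | hj)
    · unfold gapShift
      split_ifs with h
      · exact ⟨⟨by omega, by omega⟩, Or.inl ⟨by omega, hap⟩⟩
      · exact ⟨⟨by omega, by omega⟩, Or.inr (Or.inr ⟨by omega, hap⟩)⟩
    · split_ifs at hj with h
      · rw [mem_singleton] at hj
        exact ⟨⟨by omega, by omega⟩, Or.inr (Or.inl hj)⟩
      · exact absurd hj (notMem_empty j)

lemma apQ_insertMaxPair_add (σ : Fin (2*n) → Fin (n+1)) {g : ℕ} (hg : g ≤ 2*n) :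
    apQ (insertMaxPair σ g) + #(ascentPlateaus σ ∩ {g, g + 1}) =
      apQ σ + if 1 ≤ g then 1 else 0 := by
  rw [← card_ascentPlateaus, ← card_ascentPlateaus, ascentPlateaus_insertMaxPair σ hg,
    card_union_of_disjoint, card_image_of_injective _ (gapShift_strictMono g).injective,
    ← card_sdiff_add_card_inter (ascentPlateaus σ) {g, g + 1}]
  · split_ifs <;> simp only [card_singleton, card_empty] <;> omega
  · split_ifs
    · rw [disjoint_singleton_right, mem_image]
      rintro ⟨i, hi, hgi⟩
      rw [mem_sdiff, mem_insert, mem_singleton] at hi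
      unfold gapShift at hgi
      split_ifs at hgi <;> omega
    · exact disjoint_empty_right _

def neutralGaps (σ : Fin (2*n) → Fin (n+1)) : Finset ℕ :=
  insert 0 ((ascentPlateaus σ).biUnion fun i => {i - 1, i})

lemma mem_neutralGaps {g : ℕ} :
    g ∈ neutralGaps σ ↔ g = 0 ∨ g ∈ ascentPlateaus σ ∨ g + 1 ∈ ascentPlateaus σ := by
  simp only [neutralGaps, mem_insert, mem_biUnion, mem_singleton]
  refine or_congr_right ⟨?_, ?_⟩
  · rintro ⟨i, hi, rfl | rfl⟩
    · have := two_le_of_mem_ascentPlateaus hi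
      exact Or.inr (by rwa [Nat.sub_add_cancel (by omega)])
    · exact Or.inl hi
  · rintro (hg | hg)
    · exact ⟨g, hg, Or.inr rfl⟩
    · exact ⟨g + 1, hg, Or.inl rfl⟩

lemma card_neutralGaps (hσ : σ ∈ StirlingSet n) : #(neutralGaps σ) = 2 * apQ σ + 1 := by
  rw [neutralGaps, card_insert_of_notMem, card_biUnion, ← card_ascentPlateaus, mul_comm,
    ← smul_eq_mul, ← sum_const]
  · refine congrArg (· + 1) (sum_congr rfl fun i hi => card_pair ?_)
    have := two_le_of_mem_ascentPlateaus hi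
    omega
  · intro i hi j hj hij
    simp only [Function.onFun, disjoint_insert_left, disjoint_insert_right, disjoint_singleton,
      mem_insert, mem_singleton, not_or]
    have := two_le_of_mem_ascentPlateaus hi
    have := two_le_of_mem_ascentPlateaus hj
    rcases (by omega : j = i + 1 ∨ i = j + 1 ∨ (i + 1 < j ∨ j + 1 < i)) with rfl | rfl | h
    · exact absurd hj (succ_notMem_ascentPlateaus hσ hi)
    · exact absurd hi (succ_notMem_ascentPlateaus hσ hj)
    · omega
  · simp only [mem_biUnion, mem_insert, mem_singleton, not_exists, not_and]
    intro i hi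
    have := two_le_of_mem_ascentPlateaus hi
    omega

lemma neutralGaps_subset_range : neutralGaps σ ⊆ range (2*n + 1) := by
  intro g hg
  rw [mem_range]
  rcases mem_neutralGaps.mp hg with rfl | hg | hg <;>
    first | omega | (have := (mem_ascentPlateaus.mp hg).1; omega)

lemma apQ_le (hσ : σ ∈ StirlingSet n) : apQ σ ≤ n := by
  have := card_le_card (neutralGaps_subset_range (σ := σ))
  rw [card_neutralGaps hσ, card_range] at this
  omega

lemma apQ_insertMaxPair (hσ : σ ∈ StirlingSet n) {g : ℕ} (hg : g ≤ 2*n) :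
    apQ (insertMaxPair σ g) = if g ∈ neutralGaps σ then apQ σ else apQ σ + 1 := by
  have h := apQ_insertMaxPair_add σ hg
  rw [inter_comm, ← filter_mem_eq_inter, card_filter, sum_pair (by omega)] at h
  have h0 : 0 ∉ ascentPlateaus σ := fun h => by have := two_le_of_mem_ascentPlateaus h; omega
  have h1 : 1 ∉ ascentPlateaus σ := fun h => by have := two_le_of_mem_ascentPlateaus h; omega
  have hadj : g ∈ ascentPlateaus σ → g + 1 ∉ ascentPlateaus σ :=
    succ_notMem_ascentPlateaus hσ
  simp only [mem_neutralGaps]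
  rcases Nat.eq_zero_or_pos g with rfl | hpos
  · simp_all
  · simp only [hpos.ne', false_or]
    split_ifs at h ⊢ <;> first | omega | tauto

lemma sum_range_apQ_insertMaxPair {M : Type*} [AddCommMonoid M] (hσ : σ ∈ StirlingSet n)
    (F : ℕ → M) :
    ∑ g ∈ range (2*n + 1), F (apQ (insertMaxPair σ g)) =
      (2 * apQ σ + 1) • F (apQ σ) + (2*n - 2 * apQ σ) • F (apQ σ + 1) := by
  have hsub := neutralGaps_subset_range (σ := σ)
  rw [sum_congr rfl fun g hg => by
      rw [apQ_insertMaxPair hσ (by rw [mem_range] at hg; omega), apply_ite F],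
    sum_ite, sum_const, sum_const, filter_mem_eq_inter, inter_eq_right.mpr hsub,
    filter_notMem_eq_sdiff, card_sdiff_of_subset hsub, card_range, card_neutralGaps hσ]
  congr 2
  omega

end AscentPlateaus

lemma sum_stirlingSet_succ_apQ {M : Type*} [AddCommMonoid M] (n : ℕ) (F : ℕ → M) :
    ∑ τ ∈ StirlingSet (n+1), F (apQ τ) =
      ∑ σ ∈ StirlingSet n,
        ((2 * apQ σ + 1) • F (apQ σ) + (2*n - 2 * apQ σ) • F (apQ σ + 1)) := by
  rw [sum_stirlingSet_succ]
  exact sum_congr rfl fun σ hσ => sum_range_apQ_insertMaxPair hσ F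

lemma stirlingSet_zero : StirlingSet 0 = univ := by
  ext σ
  simp [StirlingSet]

lemma Derivation.map_pow_mul_pow {R A : Type*} [CommSemiring R] [CommSemiring A] [Algebra R A]
    (D : Derivation R A A) {y z : A} (hy : D y = y * z ^ 2) (hz : D z = y ^ 2 * z) (a b : ℕ) :
    D (y ^ a * z ^ b) = a • (y ^ a * z ^ (b + 2)) + b • (y ^ (a + 2) * z ^ b) := by
  rw [Derivation.leibniz, Derivation.leibniz_pow, Derivation.leibniz_pow, hy, hz]
  cases a <;> cases b <;> simp only [smul_eq_mul, nsmul_eq_mul, Nat.add_sub_cancel] <;> ring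

theorem Derivation.pow_apply_eq_sum_stirlingSet {R A : Type*} [CommSemiring R] [CommSemiring A]
    [Algebra R A] (D : Derivation R A A) {y z : A} (hy : D y = y * z ^ 2)
    (hz : D z = y ^ 2 * z) (n : ℕ) :
    (D.toLinearMap ^ n) y =
      y * ∑ σ ∈ StirlingSet n, y ^ (2 * apQ σ) * z ^ (2 * n - 2 * apQ σ) := by
  induction n with
  | zero => simp [stirlingSet_zero, apQ]
  | succ n ih =>
    rw [pow_succ', Module.End.mul_apply, ih, mul_sum, mul_sum, map_sum,
      sum_stirlingSet_succ_apQ n (fun a => y * (y ^ (2 * a) * z ^ (2 * (n+1) - 2 * a)))]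
    refine sum_congr rfl fun σ hσ => ?_
    have := apQ_le hσ
    rw [Derivation.coeFn_coe, ← mul_assoc, ← pow_succ', Derivation.map_pow_mul_pow D hy hz,
      show 2 * (n + 1) - 2 * apQ σ = 2 * n - 2 * apQ σ + 2 by omega,
      show 2 * (n + 1) - 2 * (apQ σ + 1) = 2 * n - 2 * apQ σ by omega]
    ring

theorem statement_3_general
    (D : Derivation ℚ (MvPolynomial (Fin 3) ℚ) (MvPolynomial (Fin 3) ℚ))
    (hy : D (X 1) = X 1 * X 2 ^ 2)
    (hz : D (X 2) = X 1 ^ 2 * X 2) (n : ℕ) :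
    (D.toLinearMap ^ n) (X 1) =
      X 1 * ∑ σ ∈ StirlingSet n, X 1 ^ (2 * apQ σ) * X 2 ^ (2 * n - 2 * apQ σ) :=
  D.pow_apply_eq_sum_stirlingSet hy hz n

theorem statement_3
    (D : Derivation ℚ (MvPolynomial (Fin 3) ℚ) (MvPolynomial (Fin 3) ℚ))
    (hx : D (X 0) = X 0 * X 1 * X 2)
    (hy : D (X 1) = X 1 * X 2 ^ 2)
    (hz : D (X 2) = X 1 ^ 2 * X 2) (n : ℕ) :
    (D.toLinearMap ^ n) (X 1) =
      X 1 * ∑ σ ∈ StirlingSet n, X 1 ^ (2 * apQ σ) * X 2 ^ (2 * n - 2 * apQ σ) :=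
  statement_3_general D hy hz n
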